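/- arXiv:1806.01722 — 3 statements merged into one kernel-verified Lean document; each statement's English description precedes it below -/
import Mathlib

section
/- Let a = k(k+1)(k+2)/(n(n+1)(n+2)), b = (k−1)k(k+1)/((n−1)n(n+1)), c = (k−2)(k−1)k/((n−2)(n−1)n), for integers 3 ≤ k < n (so all denominators are nonzero). Then a − 2b + c = 6·k(n−k)(2k−n)·Q for some rational Q ≠ 0, and in particular a/6 − b/3 + c/6 = 0 if and only if n = 2k. -/
theorem second_difference_hook_ratios {K : Type*} [Field K] (x : K) {y : K}
    (hy : (y - 2) * (y - 1) * y * (y + 1) * (y + 2) ≠ 0) :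
    x * (x + 1) * (x + 2) / (y * (y + 1) * (y + 2))
        - 2 * ((x - 1) * x * (x + 1) / ((y - 1) * y * (y + 1)))
        + (x - 2) * (x - 1) * x / ((y - 2) * (y - 1) * y)
      = 6 * x * (y - x) * (y - 2 * x) / ((y - 2) * (y - 1) * y * (y + 1) * (y + 2)) := by
  simp only [mul_ne_zero_iff] at hy
  obtain ⟨⟨⟨⟨hy₂, hy₁⟩, hy₀⟩, hy₁'⟩, hy₂'⟩ := hy
  field_simp
  ring

/-- For integers `3 ≤ k < n`, with
`a = k(k+1)(k+2)/(n(n+1)(n+2))`, `b = (k-1)k(k+1)/((n-1)n(n+1))`,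
`c = (k-2)(k-1)k/((n-2)(n-1)n)`, we have `a - 2b + c = 6·k(n-k)(2k-n)·Q` for some
nonzero rational `Q`; in particular `a/6 - b/3 + c/6 = 0` if and only if `n = 2k`. -/
theorem hook_ratio_combination (k n : ℕ) (hk : 3 ≤ k) (hkn : k < n) :
    let a : ℚ := ((k : ℚ) * (k + 1) * (k + 2)) / ((n : ℚ) * (n + 1) * (n + 2))
    let b : ℚ := (((k : ℚ) - 1) * k * (k + 1)) / (((n : ℚ) - 1) * n * (n + 1))
    let c : ℚ := (((k : ℚ) - 2) * ((k : ℚ) - 1) * k) / (((n : ℚ) - 2) * ((n : ℚ) - 1) * n)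
    (∃ Q : ℚ, Q ≠ 0 ∧
        a - 2 * b + c = 6 * (k : ℚ) * ((n : ℚ) - k) * (2 * (k : ℚ) - n) * Q) ∧
      (a / 6 - b / 3 + c / 6 = 0 ↔ n = 2 * k) := by
  intro a b c
  have hkQ : (3 : ℚ) ≤ k := by exact_mod_cast hk
  have hknQ : (k : ℚ) < n := by exact_mod_cast hkn
  set D : ℚ := ((n : ℚ) - 2) * ((n : ℚ) - 1) * n * (n + 1) * (n + 2)
  have hD : D ≠ 0 := by
    have : (0 : ℚ) < D := by
      refine mul_pos (mul_pos (mul_pos (mul_pos ?_ ?_) ?_) ?_) ?_ <;> linarith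
    exact this.ne'
  have hsum : a - 2 * b + c = 6 * k * (n - k) * (n - 2 * k) / D :=
    second_difference_hook_ratios _ hD
  have hk0 : (k : ℚ) ≠ 0 := by linarith
  have hnk : (n : ℚ) - k ≠ 0 := by linarith
  refine ⟨⟨-1 / D, by simp [hD], by rw [hsum]; field_simp; ring⟩, ?_⟩
  calc a / 6 - b / 3 + c / 6 = 0 ↔ (a - 2 * b + c) / 6 = 0 := by ring_nf
    _ ↔ (n : ℚ) - 2 * k = 0 := by simp [hsum, hk0, hnk, hD]
    _ ↔ n = 2 * k := by rw [sub_eq_zero]; exact_mod_cast Iff.rfl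
end

section
/- Fix 1 ≤ k < n and pairwise distinct reals m₁,…,mₙ with ∑ m_i = 0. Define M(t) as the n×n matrix whose first k rows are (e^{−m_j t} m_j^{i−1})_{j=1..n} for i = 1,…,k, and whose remaining n−k rows are (m_j^{i−1})_{j=1..n} for i = 1,…,n−k. Then the coefficient of t^{k(n−k)+1} in the power series of det M(t) at t = 0 is zero. -/
/-!
Expanding `det M(t)` by the Leibniz formula writes it as a combination of exponentials
`exp (-(m_{σ 0} + ⋯ + m_{σ (k-1)}) t)`, so its `N`-th derivative at `0` is an alternating sum of
products of powers of the `m_j`. Expanding the `N`-th power multinomially turns it into a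
combination of generalized Vandermonde determinants `det (m_j ^ b_i)` whose exponents add up to
`0 + 1 + ⋯ + (n-1) + 1` when `N = k(n-k)+1`. Such a determinant vanishes: either two exponents
coincide, or the exponents are `0, …, n-2, n`, and then the coefficients of
`∏ (X - m_j) = X^n - (∑ m_j) X^(n-1) + ⋯` give a vector in its left kernel.
-/

open Finset Polynomial Real Equiv

namespace Finset

theorem sum_range_card_le_sum (S : Finset ℕ) : ∑ i ∈ range #S, i ≤ ∑ x ∈ S, x := by
  induction S using Finset.induction_on_max with
  | empty => simp
  | insert a S ha ih =>
    have hcard : #S ≤ a := by simpa using card_le_card fun x hx => mem_range.2 (ha x hx)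
    rw [card_insert_of_notMem fun h => (ha a h).false, sum_range_succ,
      sum_insert fun h => (ha a h).false]
    omega

theorem eq_erase_range_of_sum_eq {S : Finset ℕ} {n : ℕ} (hcard : #S = n)
    (hsum : ∑ x ∈ S, x = ∑ i ∈ range n, i + 1) : S = (range (n + 1)).erase (n - 1) := by
  have hsub : S ⊆ range (n + 1) := by
    intro x hx
    have hrest := sum_range_card_le_sum (S.erase x)
    rw [card_erase_of_mem hx, hcard] at hrest
    have hn : n = n - 1 + 1 := by have := card_pos.2 ⟨x, hx⟩; omega
    rw [← add_sum_erase S _ hx, hn, sum_range_succ] at hsum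
    rw [mem_range]
    omega
  obtain ⟨a, ha⟩ : ∃ a, range (n + 1) \ S = {a} := by
    rw [← card_eq_one, card_sdiff_of_subset hsub, card_range, hcard]
    omega
  have hS : S = (range (n + 1)).erase a := by
    rw [← sdiff_singleton_eq_erase, ← ha, sdiff_sdiff_eq_self hsub]
  have ha_mem : a ∈ range (n + 1) := (mem_sdiff.1 (ha ▸ mem_singleton_self a)).1
  have hsum_range := sum_erase_add (range (n + 1)) id ha_mem
  rw [← hS, sum_range_succ] at hsum_range
  rw [hS, show a = n - 1 by simp only [id] at hsum_range; omega]

end Finset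

theorem Matrix.det_eq_sum_sign_mul_prod_apply {ι R : Type*} [Fintype ι] [DecidableEq ι]
    [CommRing R] (M : Matrix ι ι R) :
    M.det = ∑ σ : Perm ι, ((Perm.sign σ : ℤ) : R) * ∏ i, M i (σ i) := by
  rw [← det_transpose, det_apply']
  rfl

theorem Matrix.det_of_pow_eq_zero {K : Type*} [Field K] {n : ℕ} (m : Fin n → K)
    (hm : ∑ j, m j = 0) (b : Fin n → ℕ) (hb : ∑ i, b i = ∑ i ∈ range n, i + 1) :
    (Matrix.of fun i j => m j ^ b i).det = 0 := by
  by_cases hinj : Function.Injective b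
  swap
  · obtain ⟨i, i', hbi, hne⟩ : ∃ i i', b i = b i' ∧ i ≠ i' := by
      simpa [Function.Injective] using hinj
    exact Matrix.det_zero_of_row_eq hne (by ext j; simp [hbi])
  have hn : 0 < n := Nat.pos_of_ne_zero fun h => by subst h; simp at hb
  set P : K[X] := ∏ l, (X - C (m l))
  have hdeg : P.natDegree = n := by simp [P]
  have hcoeff_pred : P.coeff (n - 1) = 0 := by
    simpa [hm] using prod_X_sub_C_coeff_card_pred univ m (by simpa using hn)
  have himage : univ.image b = (range (n + 1)).erase (n - 1) :=
    eq_erase_range_of_sum_eq (by simp [card_image_of_injective _ hinj])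
      (by rw [sum_image hinj.injOn]; exact hb)
  rw [← Matrix.exists_vecMul_eq_zero_iff]
  refine ⟨fun i => P.coeff (b i), ?_, ?_⟩
  · obtain ⟨i, -, hi⟩ :=
      mem_image.1 (himage ▸ mem_erase.2 ⟨by omega, self_mem_range_succ n⟩)
    intro h
    have := congr_fun h i
    simp only [hi, Pi.zero_apply] at this
    rw [← hdeg, (monic_prod_X_sub_C m univ).coeff_natDegree] at this
    exact one_ne_zero this
  · ext j
    calc ∑ i, P.coeff (b i) * m j ^ b i = ∑ e ∈ univ.image b, P.coeff e * m j ^ e :=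
          (sum_image (f := fun e => P.coeff e * m j ^ e) hinj.injOn).symm
    _ = ∑ e ∈ range (n + 1), P.coeff e * m j ^ e := by
          rw [himage]; exact sum_erase _ (by simp [hcoeff_pred])
    _ = P.eval (m j) := (eval_eq_sum_range' (by omega) _).symm
    _ = 0 := by simp [P, eval_prod, prod_eq_zero_iff, sub_eq_zero]

theorem sum_sign_mul_prod_pow_mul_sum_pow_eq_zero {K : Type*} [Field K] {n : ℕ}
    (m : Fin n → K) (hm : ∑ j, m j = 0) (w : Fin n → K) (e : Fin n → ℕ) (N : ℕ)
    (he : ∑ i, e i + N = ∑ i ∈ range n, i + 1) :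
    ∑ σ : Perm (Fin n),
      ((Perm.sign σ : ℤ) : K) * (∏ i, m (σ i) ^ e i) * (∑ i, w i * m (σ i)) ^ N = 0 := by
  have hdet : ∀ r ∈ piAntidiag univ N,
      ∑ σ : Perm (Fin n), ((Perm.sign σ : ℤ) : K) * ∏ i, m (σ i) ^ (e i + r i) = 0 := by
    intro r hr
    rw [← Matrix.det_of_pow_eq_zero m hm (fun i => e i + r i)
        (by rw [sum_add_distrib, (mem_piAntidiag.1 hr).1, he]),
      Matrix.det_eq_sum_sign_mul_prod_apply]
    rfl
  simp_rw [sum_pow_eq_sum_piAntidiag, mul_sum]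
  rw [sum_comm]
  refine sum_eq_zero fun r hr => ?_
  rw [← mul_zero ((Nat.multinomial univ r : K) * ∏ i, w i ^ r i), ← hdet r hr, mul_sum]
  refine sum_congr rfl fun σ _ => ?_
  simp only [mul_pow, prod_mul_distrib, pow_add]
  ring

theorem iteratedDeriv_sum_mul_exp {ι : Type*} (s : Finset ι) (c b : ι → ℝ) (N : ℕ) (x : ℝ) :
    iteratedDeriv N (fun t => ∑ σ ∈ s, c σ * exp (b σ * t)) x
      = ∑ σ ∈ s, c σ * b σ ^ N * exp (b σ * x) := by
  rw [iteratedDeriv_fun_sum fun σ _ => by fun_prop]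
  simp [mul_assoc]

theorem Matrix.det_of_exp_mul_pow {ι : Type*} [Fintype ι] [DecidableEq ι] (w m : ι → ℝ)
    (e : ι → ℕ) (t : ℝ) :
    (Matrix.of fun i j => exp (w i * m j * t) * m j ^ e i).det
      = ∑ σ : Perm ι,
          ((Perm.sign σ : ℤ) : ℝ) * (∏ i, m (σ i) ^ e i) * exp ((∑ i, w i * m (σ i)) * t) := by
  rw [det_eq_sum_sign_mul_prod_apply]
  refine sum_congr rfl fun σ _ => ?_
  simp only [of_apply, prod_mul_distrib, ← exp_sum, sum_mul]
  ring

theorem sum_range_ite_add_mul (n k : ℕ) :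
    ∑ i ∈ range n, (if i < k then i else i - k) + k * (n - k) = ∑ i ∈ range n, i := by
  induction n with
  | zero => simp
  | succ n ih =>
    rw [sum_range_succ, sum_range_succ, ← ih]
    by_cases h : n < k
    · rw [if_pos h, show n + 1 - k = n - k by omega]; ring
    · rw [if_neg h, show n + 1 - k = n - k + 1 by omega, mul_add]; omega

theorem det_coeff_vanishes_general (n k : ℕ)
    (m : Fin n → ℝ) (hsum : ∑ j, m j = 0) :
    iteratedDeriv (k * (n - k) + 1)
      (fun t : ℝ =>
        (Matrix.of fun i j : Fin n =>
          if (i : ℕ) < k then Real.exp (-(m j) * t) * m j ^ (i : ℕ)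
          else m j ^ ((i : ℕ) - k)).det) 0 = 0 := by
  set w : Fin n → ℝ := fun i => if (i : ℕ) < k then -1 else 0
  set e : Fin n → ℕ := fun i => if (i : ℕ) < k then i else i - k
  have hM : ∀ t : ℝ, (Matrix.of fun i j : Fin n =>
      if (i : ℕ) < k then exp (-(m j) * t) * m j ^ (i : ℕ) else m j ^ ((i : ℕ) - k))
        = Matrix.of fun i j => exp (w i * m j * t) * m j ^ e i := by
    intro t
    ext i j
    by_cases hi : (i : ℕ) < k <;> simp [w, e, hi]
  have he : ∑ i, e i + (k * (n - k) + 1) = ∑ i ∈ range n, i + 1 := by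
    rw [Fin.sum_univ_eq_sum_range (fun i => if i < k then i else i - k),
      ← sum_range_ite_add_mul n k]
    ring
  simp_rw [hM, Matrix.det_of_exp_mul_pow, iteratedDeriv_sum_mul_exp, mul_zero, exp_zero, mul_one]
  exact sum_sign_mul_prod_pow_mul_sum_pow_eq_zero m hsum w e _ he

/-- For `1 ≤ k < n` and pairwise distinct reals `m₁,…,mₙ` with `∑ m_j = 0`, let `M(t)` be the
`n×n` matrix whose first `k` rows are `(e^{-m_j t} m_j^{i-1})_j`, `i = 1,…,k`, and whose
remaining `n-k` rows are `(m_j^{i-1})_j`, `i = 1,…,n-k`. Then the coefficient of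
`t^{k(n-k)+1}` in the power series of `det M(t)` at `t = 0` vanishes, i.e. the
`(k(n-k)+1)`-st derivative of `det M(t)` at `0` is zero. -/
theorem det_coeff_vanishes (n k : ℕ) (hk : 1 ≤ k) (hkn : k < n)
    (m : Fin n → ℝ) (hm : Function.Injective m) (hsum : ∑ j, m j = 0) :
    iteratedDeriv (k * (n - k) + 1)
      (fun t : ℝ =>
        (Matrix.of fun i j : Fin n =>
          if (i : ℕ) < k then Real.exp (-(m j) * t) * m j ^ (i : ℕ)
          else m j ^ ((i : ℕ) - k)).det) 0 = 0 :=
  det_coeff_vanishes_general n k m hsum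
end

section
/- Let n ≥ 1 and let m₁,…,mₙ be pairwise distinct reals. For k = 1, define the n×n matrix M(t) with first row (e^{−m_j t})_{j=1..n} and rows 2,…,n given by (m_j^{i−2})_{j=1..n} for i = 2,…,n. Then the lowest nonvanishing term of det M(t) at t = 0 has order t^{n−1}, with coefficient (−1)^{σ} V/(n−1)! where V = ∏_{i<j}(m_i − m_j) is the Vandermonde determinant and σ is an explicit sign depending only on n (namely the sign of the permutation reversing n−1 rows, times (−1)^{n−1}). -/
/-!
Expanding `det M(t)` along its first row writes it as `∑ⱼ cⱼ e^{-mⱼ t}` with cofactors `cⱼ`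
independent of `t`, so the `p`-th derivative at `0` is the same determinant with first row
`((-mⱼ)^p)ⱼ = (-1)^p (mⱼ^p)ⱼ`. For `p < n - 1` this row is a multiple of another row. For
`p = n - 1` the matrix is the transposed Vandermonde matrix with its rows cyclically rotated,
which costs the sign `(-1)^{n-1}`.
-/

open Finset Matrix Real

theorem Matrix.det_updateRow_eq_sum {R ι : Type*} [CommRing R] [Fintype ι] [DecidableEq ι]
    (A : Matrix ι ι R) (i : ι) (r : ι → R) :
    (A.updateRow i r).det = ∑ j, r j * (A.updateRow i (Pi.single j 1)).det := by
  rw [det_eq_sum_mul_adjugate_row _ i]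
  simp_rw [adjugate_apply, updateRow_idem, updateRow_self]

theorem iteratedDeriv_sum_exp_mul_mul {ι : Type*} [Fintype ι] (b c : ι → ℝ) (p : ℕ) (x : ℝ) :
    iteratedDeriv p (fun t => ∑ i, exp (b i * t) * c i) x =
      ∑ i, b i ^ p * exp (b i * x) * c i := by
  rw [iteratedDeriv_fun_sum fun i _ => by fun_prop]
  simp_rw [iteratedDeriv_mul_const_field, iteratedDeriv_exp_const_mul]

theorem Matrix.iteratedDeriv_det_updateRow_exp_mul {ι : Type*} [Fintype ι] [DecidableEq ι]
    (A : Matrix ι ι ℝ) (i : ι) (b : ι → ℝ) (p : ℕ) :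
    iteratedDeriv p (fun t => (A.updateRow i fun j => exp (b j * t)).det) 0 =
      (A.updateRow i fun j => b j ^ p).det := by
  have hexpand : (fun t => (A.updateRow i fun j => exp (b j * t)).det) =
      fun t => ∑ j, exp (b j * t) * (A.updateRow i (Pi.single j 1)).det :=
    funext fun t => det_updateRow_eq_sum A i _
  rw [hexpand, iteratedDeriv_sum_exp_mul_mul, det_updateRow_eq_sum A i]
  simp

theorem Matrix.det_transpose_vandermonde_submatrix_finRotate_symm {R : Type*} [CommRing R]
    {n : ℕ} (v : Fin (n + 1) → R) :
    ((vandermonde v)ᵀ.submatrix (finRotate (n + 1)).symm id).det =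
      (-1) ^ n * (vandermonde v).det := by
  rw [det_permute, det_transpose, Equiv.Perm.sign_symm, sign_finRotate]
  simp

theorem Fin.sum_card_Ioi (n : ℕ) : ∑ i : Fin n, #(Ioi i) = n.choose 2 := by
  simp_rw [Fin.card_Ioi, Fin.sum_univ_eq_sum_range (fun i => n - 1 - i),
    sum_range_reflect (fun i => i), sum_range_id, Nat.choose_two_right]

theorem Fin.prod_prod_Ioi_sub_swap {R : Type*} [CommRing R] {n : ℕ} (v : Fin n → R) :
    ∏ i, ∏ j ∈ Ioi i, (v j - v i) = (-1) ^ n.choose 2 * ∏ i, ∏ j ∈ Ioi i, (v i - v j) := by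
  rw [← Fin.sum_card_Ioi, ← prod_pow_eq_pow_sum, ← prod_mul_distrib]
  refine prod_congr rfl fun i _ => ?_
  rw [pow_card_mul_prod]
  exact prod_congr rfl fun j _ => by ring

theorem Matrix.of_ite_eq_updateRow_vandermonde {R : Type*} [CommRing R] {n : ℕ}
    (v r : Fin (n + 1) → R) :
    (of fun i j : Fin (n + 1) => if (i : ℕ) = 0 then r j else v j ^ ((i : ℕ) - 1)) =
      ((vandermonde v)ᵀ.submatrix (finRotate (n + 1)).symm id).updateRow 0 r := by
  ext i j
  rcases Fin.eq_zero_or_eq_succ i with rfl | ⟨k, rfl⟩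
  · simp
  · simp [finRotate_symm_apply, Fin.coe_sub_one]

/-- The `k = 1` case of the determinant expansion: for pairwise distinct reals `m₁,…,mₙ`,
let `M(t)` be the `n×n` matrix with first row `(e^{-m_j t})_j` and rows `i = 2,…,n` equal
to `(m_j^{i-2})_j`. Then all derivatives of `det M(t)` at `0` of order `< n-1` vanish, and
the `t^{n-1}` coefficient is `(-1)^σ V/(n-1)!` where `V = ∏_{i<j}(m_i - m_j) ≠ 0` is the
Vandermonde determinant and `σ = (n-1)(n-2)/2 + (n-1)` (the sign of the permutation
reversing `n-1` rows, times `(-1)^{n-1}`); i.e. the lowest nonvanishing term has order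
`t^{n-1}`. -/
theorem det_expansion_k_one (n : ℕ) (hn : 1 ≤ n)
    (m : Fin n → ℝ) (hm : Function.Injective m) :
    let F : ℝ → ℝ := fun t =>
      (Matrix.of fun i j : Fin n =>
        if (i : ℕ) = 0 then Real.exp (-(m j) * t) else m j ^ ((i : ℕ) - 1)).det
    let V : ℝ := ∏ i : Fin n, ∏ j ∈ Finset.Ioi i, (m i - m j)
    (∀ p < n - 1, iteratedDeriv p F 0 = 0) ∧
      iteratedDeriv (n - 1) F 0 = (-1) ^ ((n - 1) * (n - 2) / 2 + (n - 1)) * V ∧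
      V ≠ 0 := by
  intro F V
  obtain ⟨N, rfl⟩ : ∃ N, n = N + 1 := ⟨n - 1, by omega⟩
  set P := (vandermonde m)ᵀ.submatrix (finRotate (N + 1)).symm id
  have hderiv (p : ℕ) :
      iteratedDeriv p F 0 = (-1) ^ p * (P.updateRow 0 fun j => m j ^ p).det := by
    simp only [F, of_ite_eq_updateRow_vandermonde]
    rw [iteratedDeriv_det_updateRow_exp_mul, ← det_updateRow_smul]
    congr with j
    exact neg_pow (m j) p
  have hV : (vandermonde m).det = (-1) ^ (N + 1).choose 2 * V := by
    rw [det_vandermonde, Fin.prod_prod_Ioi_sub_swap]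
  refine ⟨fun p hp => ?_, ?_, ?_⟩
  · rw [hderiv, det_zero_of_row_eq (i := 0) (j := Fin.succ ⟨p, by omega⟩)
      (Fin.succ_ne_zero _).symm, mul_zero]
    ext j
    simp [P, finRotate_symm_apply, Fin.coe_sub_one]
  · have hrow : (fun j => m j ^ N) = P 0 := by ext j; simp [P, finRotate_symm_apply]
    rw [Nat.add_sub_cancel, hderiv, hrow, updateRow_eq_self,
      det_transpose_vandermonde_submatrix_finRotate_symm, hV, Nat.choose_succ_succ',
      Nat.choose_one_right, Nat.choose_two_right, ← mul_assoc, ← pow_add,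
      Even.neg_one_pow ⟨N, rfl⟩, one_mul, add_comm N, show N + 1 - 2 = N - 1 by omega]
  · exact fun hV0 => det_vandermonde_ne_zero_iff.mpr hm (by rw [hV, hV0, mul_zero])
end
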